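/- arXiv:2111.09831 — 7 statements merged into one kernel-verified Lean document; each statement's English description precedes it below -/
import Mathlib

section
/- Let Σ be a real symmetric positive semidefinite m×m matrix, let i be a fixed index, and let Γ be the matrix obtained from Σ by setting entry Γ_{jk} = 0 whenever j ≠ k and (j = i or k = i), and Γ_{jk} = Σ_{jk} otherwise. If L ≥ 0 is such that v^T Σ v ≤ L‖v‖² for all v ∈ ℝ^m, then v^T Γ v ≤ 2L‖v‖² for all v ∈ ℝ^m. -/
open Matrix BigOperators

/-- The "intervened" matrix: zero out off-diagonal entries in row `i` and column `i`. -/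
def intervene {m : ℕ} (S : Matrix (Fin m) (Fin m) ℝ) (i : Fin m) : Matrix (Fin m) (Fin m) ℝ :=
  Matrix.of fun j k => if j ≠ k ∧ (j = i ∨ k = i) then 0 else S j k

/-!
Let `P` be the coordinate projection onto `{i}` and `Q = 1 - P`. Then the intervened matrix is the
pinching `P S P + Q S Q`, so its quadratic form at `v` is `(Pv)ᵀ S (Pv) + (Qv)ᵀ S (Qv)`, which is at
most `L (‖Pv‖² + ‖Qv‖²) = L ‖v‖²`. Hence even the bound `L ‖v‖²` holds, and `2 L ‖v‖²` follows
from `L ≥ 0`.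
-/

section Pinching

variable {ι : Type*} [Fintype ι]

theorem Matrix.dotProduct_diagonal_mul_mul_diagonal_mulVec [DecidableEq ι] {R : Type*}
    [CommSemiring R] (S : Matrix ι ι R) (d v : ι → R) :
    v ⬝ᵥ (diagonal d * S * diagonal d) *ᵥ v = (d * v) ⬝ᵥ S *ᵥ (d * v) := by
  have hvec : v ᵥ* diagonal d = d * v := funext fun j => by simp [vecMul_diagonal, mul_comm]
  have hmul : diagonal d *ᵥ v = d * v := funext fun j => mulVec_diagonal d v j
  rw [← mulVec_mulVec, ← mulVec_mulVec, dotProduct_mulVec, hvec, hmul]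

theorem Set.indicator_dotProduct_self_add_compl (s : Set ι) (v : ι → ℝ) :
    s.indicator v ⬝ᵥ s.indicator v + sᶜ.indicator v ⬝ᵥ sᶜ.indicator v = v ⬝ᵥ v := by
  simp only [dotProduct, ← Finset.sum_add_distrib]
  refine Finset.sum_congr rfl fun j _ => ?_
  by_cases hj : j ∈ s <;> simp [hj]

noncomputable def Matrix.pinching [DecidableEq ι] (S : Matrix ι ι ℝ) (s : Set ι) : Matrix ι ι ℝ :=
  diagonal (s.indicator 1) * S * diagonal (s.indicator 1) +
    diagonal (sᶜ.indicator 1) * S * diagonal (sᶜ.indicator 1)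

theorem Matrix.dotProduct_pinching_mulVec [DecidableEq ι] (S : Matrix ι ι ℝ) (s : Set ι)
    (v : ι → ℝ) :
    v ⬝ᵥ S.pinching s *ᵥ v =
      s.indicator v ⬝ᵥ S *ᵥ s.indicator v + sᶜ.indicator v ⬝ᵥ S *ᵥ sᶜ.indicator v := by
  have hind : ∀ t : Set ι, t.indicator 1 * v = t.indicator v :=
    fun t => funext fun j => by by_cases hj : j ∈ t <;> simp [hj]
  simp only [pinching, add_mulVec, dotProduct_add, dotProduct_diagonal_mul_mul_diagonal_mulVec,
    hind]

theorem Matrix.dotProduct_pinching_mulVec_le [DecidableEq ι] {S : Matrix ι ι ℝ} {L : ℝ}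
    (hSL : ∀ v, v ⬝ᵥ S *ᵥ v ≤ L * (v ⬝ᵥ v)) (s : Set ι) (v : ι → ℝ) :
    v ⬝ᵥ S.pinching s *ᵥ v ≤ L * (v ⬝ᵥ v) :=
  calc v ⬝ᵥ S.pinching s *ᵥ v
      = s.indicator v ⬝ᵥ S *ᵥ s.indicator v + sᶜ.indicator v ⬝ᵥ S *ᵥ sᶜ.indicator v :=
        dotProduct_pinching_mulVec S s v
    _ ≤ L * (s.indicator v ⬝ᵥ s.indicator v) + L * (sᶜ.indicator v ⬝ᵥ sᶜ.indicator v) :=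
        add_le_add (hSL _) (hSL _)
    _ = L * (v ⬝ᵥ v) := by rw [← mul_add, Set.indicator_dotProduct_self_add_compl]

end Pinching

theorem intervene_eq_pinching {m : ℕ} (S : Matrix (Fin m) (Fin m) ℝ) (i : Fin m) :
    intervene S i = S.pinching {i} := by
  ext j k
  by_cases hj : j = i <;> by_cases hk : k = i <;>
    simp [intervene, pinching, diagonal_mul, mul_diagonal, hj, hk, eq_comm (a := i)]

theorem stmt1_general {m : ℕ} (S : Matrix (Fin m) (Fin m) ℝ) (i : Fin m)
    (L : ℝ) (hL : 0 ≤ L) (hSL : ∀ v : Fin m → ℝ, v ⬝ᵥ S.mulVec v ≤ L * (v ⬝ᵥ v)) :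
    ∀ v : Fin m → ℝ, v ⬝ᵥ (intervene S i).mulVec v ≤ 2 * L * (v ⬝ᵥ v) := by
  intro v
  have hv : 0 ≤ v ⬝ᵥ v := dotProduct_self_star_nonneg v
  rw [intervene_eq_pinching]
  exact (dotProduct_pinching_mulVec_le hSL {i} v).trans (by nlinarith)

theorem stmt1 {m : ℕ} (S : Matrix (Fin m) (Fin m) ℝ) (hS : S.PosSemidef) (i : Fin m)
    (L : ℝ) (hL : 0 ≤ L) (hSL : ∀ v : Fin m → ℝ, v ⬝ᵥ S.mulVec v ≤ L * (v ⬝ᵥ v)) :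
    ∀ v : Fin m → ℝ, v ⬝ᵥ (intervene S i).mulVec v ≤ 2 * L * (v ⬝ᵥ v) :=
  stmt1_general S i L hL hSL
end

section
/- Let Σ be a real symmetric positive semidefinite m×m matrix, let i be a fixed index, and let Γ be the matrix obtained from Σ by setting entry Γ_{jk} = 0 whenever j ≠ k and (j = i or k = i), and Γ_{jk} = Σ_{jk} otherwise. If ℓ ≥ 0 is such that v^T Σ v ≥ ℓ‖v‖² for all v ∈ ℝ^m, then v^T Γ v ≥ ℓ‖v‖² for all v ∈ ℝ^m. -/
open Matrix BigOperators

theorem stmt2 {m : ℕ} (S : Matrix (Fin m) (Fin m) ℝ) (hS : S.PosSemidef) (i : Fin m)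
    (l : ℝ) (hl : 0 ≤ l) (hSl : ∀ v : Fin m → ℝ, l * (v ⬝ᵥ v) ≤ v ⬝ᵥ S.mulVec v) :
    ∀ v : Fin m → ℝ, l * (v ⬝ᵥ v) ≤ v ⬝ᵥ (intervene S i).mulVec v := by
  intro v
  set w : Fin m → ℝ := Function.update v i 0 with hw
  have hwj : ∀ j, w j = if j = i then 0 else v j := by
    intro j
    by_cases h : j = i <;> simp [hw, Function.update, h]
  have e : ∀ j k, v j * (intervene S i j k * v k)
      = w j * (S j k * w k) + (if k = i then (if j = i then v i * (S i i * v i) else 0) else 0) := by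
    intro j k
    by_cases hj : j = i <;> by_cases hk : k = i
    · simp [intervene, hwj, hj, hk]
    · simp [intervene, hwj, hj, hk, Ne.symm hk]
    · simp [intervene, hwj, hj, hk, Ne.symm hj]
    · simp [intervene, hwj, hj, hk, Ne.symm hj, Ne.symm hk]
  have key : v ⬝ᵥ (intervene S i).mulVec v = w ⬝ᵥ S.mulVec w + v i * (S i i * v i) := by
    simp only [dotProduct, mulVec, Finset.mul_sum]
    simp only [e, Finset.sum_add_distrib, Finset.sum_ite_eq', Finset.mem_univ, if_true]
  have hli : l ≤ S i i := by
    have := hSl (Pi.single i 1)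
    simpa using this
  have hww : w ⬝ᵥ w + v i * v i = v ⬝ᵥ v := by
    have e2 : ∀ j, w j * w j + (if j = i then v i * v i else 0) = v j * v j := by
      intro j; by_cases hj : j = i <;> simp [hwj, hj]
    simp only [dotProduct]
    calc ∑ j, w j * w j + v i * v i
        = ∑ j, (w j * w j + (if j = i then v i * v i else 0)) := by
          simp [Finset.sum_add_distrib]
      _ = ∑ j, v j * v j := by simp only [e2]
  have h1 : l * (w ⬝ᵥ w) ≤ w ⬝ᵥ S.mulVec w := hSl w
  have h2 : l * (v i * v i) ≤ v i * (S i i * v i) := by nlinarith [sq_nonneg (v i)]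
  have h3 : l * (v ⬝ᵥ v) = l * (w ⬝ᵥ w) + l * (v i * v i) := by rw [← hww]; ring
  rw [key]
  linarith
end

section
/- Let Σ be a real symmetric positive semidefinite m×m matrix, let i be a fixed index, and let Γ be the matrix obtained from Σ by setting entry Γ_{jk} = 0 whenever j ≠ k and (j = i or k = i), and Γ_{jk} = Σ_{jk} otherwise. If ℓ, L ≥ 0 satisfy ℓ‖v‖² ≤ v^T Σ v ≤ L‖v‖² for all v ∈ ℝ^m, then for every v ∈ ℝ^m, |v^T Γ v − v^T Σ v| ≤ (2L − ℓ)‖v‖². -/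
open Matrix BigOperators

lemma intervene_quad {m : ℕ} (S : Matrix (Fin m) (Fin m) ℝ) (i : Fin m) (v : Fin m → ℝ) :
    v ⬝ᵥ (intervene S i).mulVec v
      = (Function.update v i 0) ⬝ᵥ S.mulVec (Function.update v i 0)
        + v i * (S i i * v i) := by
  classical
  set u := Function.update v i 0 with hu
  have hu' : ∀ j, u j = if j = i then 0 else v j := fun j => Function.update_apply v i 0 j
  simp only [dotProduct, Matrix.mulVec, dotProduct]
  rw [Finset.sum_eq_sum_sdiff_singleton_add (Finset.mem_univ i)
        (fun j => v j * ∑ k, intervene S i j k * v k),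
      Finset.sum_eq_sum_sdiff_singleton_add (Finset.mem_univ i)
        (fun j => u j * ∑ k, S j k * u k)]
  have h1 : ∑ j ∈ Finset.univ \ {i}, v j * ∑ k, intervene S i j k * v k
      = ∑ j ∈ Finset.univ \ {i}, u j * ∑ k, S j k * u k := by
    apply Finset.sum_congr rfl
    intro j hj
    have hji : j ≠ i := by simpa using hj
    rw [hu' j, if_neg hji]
    congr 1
    apply Finset.sum_congr rfl
    intro k _
    rw [hu' k]
    by_cases hk : k = i
    · subst hk; simp [intervene, hji]
    · simp [intervene, hk, hji]
  have h2 : v i * ∑ k, intervene S i i k * v k = v i * (S i i * v i) := by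
    congr 1
    rw [Finset.sum_eq_single i]
    · simp [intervene]
    · intro k _ hk; simp [intervene, Ne.symm hk, hk]
    · simp
  have h3 : u i * ∑ k, S i k * u k = 0 := by
    rw [hu' i]; simp
  rw [h1, h2, h3]; ring

theorem stmt3 {m : ℕ} (S : Matrix (Fin m) (Fin m) ℝ) (hS : S.PosSemidef) (i : Fin m)
    (l L : ℝ) (hl : 0 ≤ l) (hL : 0 ≤ L)
    (hbound : ∀ v : Fin m → ℝ, l * (v ⬝ᵥ v) ≤ v ⬝ᵥ S.mulVec v ∧ v ⬝ᵥ S.mulVec v ≤ L * (v ⬝ᵥ v)) :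
    ∀ v : Fin m → ℝ,
      |v ⬝ᵥ (intervene S i).mulVec v - v ⬝ᵥ S.mulVec v| ≤ (2 * L - l) * (v ⬝ᵥ v) := by
  intro v
  classical
  set u := Function.update v i 0 with hu
  have hu' : ∀ j, u j = if j = i then 0 else v j := fun j => Function.update_apply v i 0 j
  have huu : u ⬝ᵥ u ≤ v ⬝ᵥ v := by
    simp only [dotProduct]
    apply Finset.sum_le_sum
    intro j _
    rw [hu' j]
    by_cases hj : j = i
    · simp [hj, mul_self_nonneg]
    · simp [hj]
  have hvv : (0:ℝ) ≤ v ⬝ᵥ v := by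
    simp only [dotProduct]
    exact Finset.sum_nonneg fun j _ => mul_self_nonneg _
  have hvi : v i * v i ≤ v ⬝ᵥ v := by
    simp only [dotProduct]
    exact Finset.single_le_sum (fun j _ => mul_self_nonneg (v j)) (Finset.mem_univ i)
  -- diagonal bound: 0 ≤ S i i ≤ L
  have hsingle : (Pi.single i 1 : Fin m → ℝ) ⬝ᵥ S.mulVec (Pi.single i 1) = S i i := by
    simp [dotProduct, Matrix.mulVec, Finset.sum_ite_eq', Pi.single_apply, mul_comm]
  have hsingle2 : (Pi.single i 1 : Fin m → ℝ) ⬝ᵥ (Pi.single i 1 : Fin m → ℝ) = 1 := by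
    simp [dotProduct, Pi.single_apply]
  have hSii_le : S i i ≤ L := by
    have := (hbound (Pi.single i 1)).2
    rw [hsingle, hsingle2, mul_one] at this
    exact this
  have hSii_nonneg : 0 ≤ S i i := by
    have := (hbound (Pi.single i 1)).1
    rw [hsingle, hsingle2, mul_one] at this
    exact le_trans (by positivity) this
  have hquad := intervene_quad S i v
  have hu1 := (hbound u).1
  have hu2 := (hbound u).2
  have hv1 := (hbound v).1
  have hv2 := (hbound v).2
  have hlL : l * (v ⬝ᵥ v) ≤ L * (v ⬝ᵥ v) := le_trans hv1 hv2
  have hvi2 : (0:ℝ) ≤ v i * v i := mul_self_nonneg _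
  have huu0 : (0:ℝ) ≤ u ⬝ᵥ u := by
    simp only [dotProduct]
    exact Finset.sum_nonneg fun j _ => mul_self_nonneg _
  rw [hquad, abs_le]
  constructor
  · -- lower bound
    have h1 : (0:ℝ) ≤ u ⬝ᵥ S.mulVec u := le_trans (by positivity) hu1
    have h2 : (0:ℝ) ≤ v i * (S i i * v i) := by
      have : v i * (S i i * v i) = S i i * (v i * v i) := by ring
      rw [this]; positivity
    nlinarith
  · have h1 : u ⬝ᵥ S.mulVec u ≤ L * (v ⬝ᵥ v) :=
      le_trans hu2 (by nlinarith)
    have h2 : v i * (S i i * v i) ≤ L * (v ⬝ᵥ v) := by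
      have : v i * (S i i * v i) = S i i * (v i * v i) := by ring
      rw [this]
      calc S i i * (v i * v i) ≤ L * (v i * v i) := by nlinarith
        _ ≤ L * (v ⬝ᵥ v) := by nlinarith
    nlinarith
end

section
/- Let Σ be a real symmetric positive definite m×m matrix, let i be a fixed index, and let Γ be the matrix obtained from Σ by setting entry Γ_{jk} = 0 whenever j ≠ k and (j = i or k = i), and Γ_{jk} = Σ_{jk} otherwise. If 0 < ℓ ≤ L satisfy ℓ‖v‖² ≤ v^T Σ v ≤ L‖v‖² for all v ∈ ℝ^m, then for every v ∈ ℝ^m, |v^T Γ v − v^T Σ v| ≤ (2L/ℓ − 1) · v^T Σ v. -/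
/-!
Write `v = u + w` with `u` supported on the coordinate `i` and `w` vanishing there. Cutting the
off-diagonal entries of row and column `i` removes exactly the cross terms, so the quadratic form
of `Γ` at `v` is `uᵀΣu + wᵀΣw`. This lies between `0` and `L (‖u‖² + ‖w‖²) = L ‖v‖² ≤ (L / ℓ) vᵀΣv`,
so `vᵀΓv - vᵀΣv` lies between `-vᵀΣv` and `(L / ℓ - 1) vᵀΣv`.
-/

open Matrix BigOperators

theorem dotProduct_mulVec_eq_sum_sum {n R : Type*} [Fintype n] [CommSemiring R]
    (M : Matrix n n R) (v : n → R) : v ⬝ᵥ M *ᵥ v = ∑ j, ∑ k, v j * M j k * v k := by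
  simp only [dotProduct, mulVec, Finset.mul_sum, mul_assoc]

theorem dotProduct_self_eq_single_add_update {n R : Type*} [Fintype n] [DecidableEq n]
    [CommSemiring R] (v : n → R) (i : n) :
    v ⬝ᵥ v = Pi.single i (v i) ⬝ᵥ Pi.single i (v i)
      + Function.update v i 0 ⬝ᵥ Function.update v i 0 := by
  simp only [dotProduct, ← Finset.sum_add_distrib]
  refine Finset.sum_congr rfl fun j _ => ?_
  by_cases hj : j = i
  · subst hj; simp
  · simp [hj]

theorem dotProduct_mulVec_intervene {m : ℕ} (S : Matrix (Fin m) (Fin m) ℝ) (i : Fin m)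
    (v : Fin m → ℝ) :
    v ⬝ᵥ intervene S i *ᵥ v = Pi.single i (v i) ⬝ᵥ S *ᵥ Pi.single i (v i)
      + Function.update v i 0 ⬝ᵥ S *ᵥ Function.update v i 0 := by
  simp only [dotProduct_mulVec_eq_sum_sum, ← Finset.sum_add_distrib]
  refine Finset.sum_congr rfl fun j _ => Finset.sum_congr rfl fun k _ => ?_
  by_cases hj : j = i <;> by_cases hk : k = i
  · subst hj hk; simp [intervene]
  · subst hj; simp [intervene, hk, Ne.symm hk]
  · subst hk; simp [intervene, hj]
  · simp [intervene, hj, hk]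

theorem dotProduct_mulVec_intervene_nonneg {m : ℕ} {S : Matrix (Fin m) (Fin m) ℝ}
    (hS : ∀ v, 0 ≤ v ⬝ᵥ S *ᵥ v) (i : Fin m) (v : Fin m → ℝ) :
    0 ≤ v ⬝ᵥ intervene S i *ᵥ v := by
  rw [dotProduct_mulVec_intervene]
  exact add_nonneg (hS _) (hS _)

theorem dotProduct_mulVec_intervene_le {m : ℕ} {S : Matrix (Fin m) (Fin m) ℝ} {L : ℝ}
    (hS : ∀ v, v ⬝ᵥ S *ᵥ v ≤ L * (v ⬝ᵥ v)) (i : Fin m) (v : Fin m → ℝ) :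
    v ⬝ᵥ intervene S i *ᵥ v ≤ L * (v ⬝ᵥ v) := by
  rw [dotProduct_mulVec_intervene, dotProduct_self_eq_single_add_update v i, mul_add]
  exact add_le_add (hS _) (hS _)

theorem stmt4_general {m : ℕ} (S : Matrix (Fin m) (Fin m) ℝ) (i : Fin m)
    (l L : ℝ) (hl : 0 < l) (hlL : l ≤ L)
    (hbound : ∀ v : Fin m → ℝ, l * (v ⬝ᵥ v) ≤ v ⬝ᵥ S.mulVec v ∧ v ⬝ᵥ S.mulVec v ≤ L * (v ⬝ᵥ v)) :
    ∀ v : Fin m → ℝ,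
      |v ⬝ᵥ (intervene S i).mulVec v - v ⬝ᵥ S.mulVec v|
        ≤ (2 * L / l - 1) * (v ⬝ᵥ S.mulVec v) := by
  intro v
  have hS : ∀ w : Fin m → ℝ, 0 ≤ w ⬝ᵥ S *ᵥ w := fun w =>
    (mul_nonneg hl.le (dotProduct_self_star_nonneg w)).trans (hbound w).1
  have hΓ_nonneg := dotProduct_mulVec_intervene_nonneg hS i v
  have hΓ_le : v ⬝ᵥ intervene S i *ᵥ v ≤ L / l * (v ⬝ᵥ S *ᵥ v) :=
    calc v ⬝ᵥ intervene S i *ᵥ v ≤ L * (v ⬝ᵥ v) :=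
          dotProduct_mulVec_intervene_le (fun w => (hbound w).2) i v
      _ = L / l * (l * (v ⬝ᵥ v)) := by field_simp
      _ ≤ L / l * (v ⬝ᵥ S *ᵥ v) :=
          mul_le_mul_of_nonneg_left (hbound v).1 (div_nonneg (hl.le.trans hlL) hl.le)
  have hLl : 1 ≤ L / l := (one_le_div hl).2 hlL
  rw [abs_sub_le_iff, mul_div_assoc]
  constructor <;> nlinarith [hS v]

theorem stmt4 {m : ℕ} (S : Matrix (Fin m) (Fin m) ℝ) (hS : S.PosDef) (i : Fin m)
    (l L : ℝ) (hl : 0 < l) (hlL : l ≤ L)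
    (hbound : ∀ v : Fin m → ℝ, l * (v ⬝ᵥ v) ≤ v ⬝ᵥ S.mulVec v ∧ v ⬝ᵥ S.mulVec v ≤ L * (v ⬝ᵥ v)) :
    ∀ v : Fin m → ℝ,
      |v ⬝ᵥ (intervene S i).mulVec v - v ⬝ᵥ S.mulVec v|
        ≤ (2 * L / l - 1) * (v ⬝ᵥ S.mulVec v) :=
  stmt4_general S i l L hl hlL hbound
end

section
/- Let p ≥ 1, let a_1,…,a_p ∈ ℂ, and let A be the p×p companion matrix with first row (a_1,…,a_p), entries A_{r+1,r} = 1 for r = 1,…,p−1, and all other entries 0. Suppose λ_1,…,λ_p ∈ ℂ are pairwise distinct and satisfy λ^p − a_1 λ^{p−1} − ⋯ − a_p = ∏_{i=1}^p (λ − λ_i). Then for every ω ≥ 1 and every k ∈ {1,…,p}, the (1,k) entry of A^ω satisfies (A^ω)_{1,k} = (−1)^{k−1} Σ_{i=1}^p λ_i^{p+ω−1} e_{k−1}({λ_1,…,λ_p} \ {λ_i}) / ∏_{j≠i}(λ_i − λ_j), where e_{k−1} denotes the elementary symmetric polynomial of degree k−1 in the p−1 variables λ_j, j ≠ i (with e_0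 = 1). -/
open Matrix BigOperators Finset

/-- The `p × p` companion matrix with first row `a` and ones on the subdiagonal. -/
def companion (p : ℕ) (a : Fin p → ℂ) : Matrix (Fin p) (Fin p) ℂ :=
  Matrix.of fun r c => if (r : ℕ) = 0 then a c else if (r : ℕ) = (c : ℕ) + 1 then 1 else 0

/-!
Let `Q i = ∏_{j ≠ i} (X - λ_j)`, the characteristic polynomial divided by `X - λ_i`. Comparing
coefficients in `(X - λ_i) * Q i = X^p - a_1 X^{p-1} - ⋯ - a_p` shows that the reversed coefficient
vector `w_i` of `Q i` is a left eigenvector of the companion matrix `A` for `λ_i`, and by Vieta its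
`k`-th entry is `(-1)^k e_k(λ_j, j ≠ i)`. Lagrange interpolation of `X^{p-1}` at the distinct nodes
`λ_i` writes the first unit row vector as `∑ λ_i^{p-1} / Q i (λ_i) • w_i`, so the first row of `A^ω`
is `∑ λ_i^{p-1+ω} / Q i (λ_i) • w_i`.
-/

open Polynomial Lagrange

theorem Lagrange.coeff_nodal {R ι : Type*} [CommRing R] (s : Finset ι) (v : ι → R) {k : ℕ}
    (hk : k ≤ #s) :
    (nodal s v).coeff k = (-1) ^ (#s - k) * ∑ t ∈ s.powersetCard (#s - k), ∏ j ∈ t, v j := by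
  rw [nodal_eq, Finset.prod, ← Function.comp_def (f := fun t => X - C t) (g := v),
    ← Multiset.map_map, Multiset.prod_X_sub_C_coeff _ (by simpa using hk), Multiset.card_map,
    Finset.esymm_map_val]
  rfl

theorem Lagrange.eq_sum_C_mul_nodal_erase {F ι : Type*} [Field F] [DecidableEq ι]
    {s : Finset ι} {v : ι → F} {f : F[X]} (hvs : Set.InjOn v s) (hf : f.degree < #s) :
    f = ∑ i ∈ s, C (f.eval (v i) * nodalWeight s v i) * nodal (s.erase i) v := by
  conv_lhs => rw [eq_interpolate hvs hf, interpolate_apply]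
  refine Finset.sum_congr rfl fun i hi => ?_
  rw [basis_eq_prod_sub_inv_mul_nodal_div hi, ← nodal_erase_eq_nodal_div hi, C_mul]
  ring

section Companion

variable {p : ℕ} {a : Fin p → ℂ}

noncomputable def companionPoly (p : ℕ) (a : Fin p → ℂ) : ℂ[X] :=
  X ^ p - ∑ k : Fin p, C (a k) * X ^ (p - 1 - (k : ℕ))

theorem coeff_companionPoly (k : Fin p) : (companionPoly p a).coeff (p - 1 - k) = -a k := by
  rw [companionPoly, coeff_sub, coeff_X_pow, if_neg (by omega), finsetSum_coeff,
    Finset.sum_eq_single k]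
  · simp
  · intro m _ hm
    rw [coeff_C_mul, coeff_X_pow, if_neg (by omega), mul_zero]
  · simp

theorem companionPoly_eq_nodal {lam : Fin p → ℂ}
    (hroots : ∀ z : ℂ, z ^ p - ∑ k : Fin p, a k * z ^ (p - 1 - (k : ℕ))
      = ∏ i : Fin p, (z - lam i)) :
    companionPoly p a = nodal univ lam :=
  Polynomial.funext fun z => by simpa [companionPoly, eval_nodal, eval_finsetSum] using hroots z

theorem vecMul_companion_apply (v : Fin p → ℂ) (k : Fin p) :
    (v ᵥ* companion p a) k =
      v ⟨0, k.pos⟩ * a k + if h : (k : ℕ) + 1 < p then v ⟨k + 1, h⟩ else 0 := by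
  rw [vecMul, dotProduct, ← Finset.add_sum_erase _ _ (mem_univ ⟨0, k.pos⟩)]
  simp only [companion, of_apply, if_true]
  congr 1
  split_ifs with h
  · rw [Finset.sum_eq_single_of_mem ⟨k + 1, h⟩ (by simp [Fin.ext_iff])]
    · simp
    · intro c hc hck
      have hc0 : (c : ℕ) ≠ 0 := fun h0 => (mem_erase.mp hc).1 (Fin.ext h0)
      rw [if_neg hc0, if_neg (fun h' => hck (Fin.ext h')), mul_zero]
  · refine Finset.sum_eq_zero fun c hc => ?_
    have hc0 : (c : ℕ) ≠ 0 := fun h0 => (mem_erase.mp hc).1 (Fin.ext h0)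
    rw [if_neg hc0, if_neg (by omega), mul_zero]

def revCoeffs (p : ℕ) (Q : ℂ[X]) : Fin p → ℂ := fun k => Q.coeff (p - 1 - k)

theorem revCoeffs_vecMul_companion {μ : ℂ} {Q : ℂ[X]} (hQ : Q.coeff (p - 1) = 1)
    (hfac : companionPoly p a = (X - C μ) * Q) :
    revCoeffs p Q ᵥ* companion p a = μ • revCoeffs p Q := by
  ext k
  have hcoeff := congrArg (coeff · (p - 1 - k)) hfac
  simp only [coeff_companionPoly, sub_mul, coeff_sub, coeff_C_mul] at hcoeff
  rw [vecMul_companion_apply, Pi.smul_apply, smul_eq_mul]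
  simp only [revCoeffs, Nat.sub_zero, hQ, one_mul]
  split_ifs with h
  · rw [show p - 1 - k = p - 1 - (k + 1) + 1 by omega] at hcoeff ⊢
    rw [coeff_X_mul] at hcoeff
    linear_combination -hcoeff
  · rw [show p - 1 - k = 0 by omega] at hcoeff ⊢
    rw [coeff_X_mul_zero] at hcoeff
    linear_combination -hcoeff

variable {lam : Fin p → ℂ}

theorem revCoeffs_nodal_erase_vecMul_companion
    (hroots : ∀ z : ℂ, z ^ p - ∑ k : Fin p, a k * z ^ (p - 1 - (k : ℕ))
      = ∏ i : Fin p, (z - lam i)) (i : Fin p) :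
    revCoeffs p (nodal (univ.erase i) lam) ᵥ* companion p a
      = lam i • revCoeffs p (nodal (univ.erase i) lam) := by
  refine revCoeffs_vecMul_companion ?_
    ((companionPoly_eq_nodal hroots).trans (nodal_eq_mul_nodal_erase (mem_univ i)))
  have hdeg : (nodal (univ.erase i) lam).natDegree = p - 1 := by simp [natDegree_nodal]
  rw [← hdeg]
  exact nodal_monic

theorem pi_single_eq_sum_smul_revCoeffs_nodal_erase (hp : 0 < p)
    (hlam : Function.Injective lam) :
    Pi.single ⟨0, hp⟩ 1
      = ∑ i, (lam i ^ (p - 1) * nodalWeight univ lam i) •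
          revCoeffs p (nodal (univ.erase i) lam) := by
  have hdeg : (X ^ (p - 1) : ℂ[X]).degree < #(univ : Finset (Fin p)) := by
    rw [degree_X_pow, card_univ, Fintype.card_fin]
    exact_mod_cast Nat.sub_lt hp one_pos
  have hinterp := eq_sum_C_mul_nodal_erase hlam.injOn hdeg
  ext k
  have hcoeff := congrArg (coeff · (p - 1 - k)) hinterp
  simp only [finsetSum_coeff, coeff_C_mul, coeff_X_pow, eval_pow, eval_X] at hcoeff
  simp only [Finset.sum_apply, Pi.smul_apply, smul_eq_mul, revCoeffs, ← hcoeff, Pi.single_apply,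
    Fin.ext_iff]
  exact if_congr (by omega) rfl rfl

theorem companion_pow_apply_zero (hp : 0 < p) (hlam : Function.Injective lam)
    (hroots : ∀ z : ℂ, z ^ p - ∑ k : Fin p, a k * z ^ (p - 1 - (k : ℕ))
      = ∏ i : Fin p, (z - lam i)) (n : ℕ) :
    (companion p a ^ n) ⟨0, hp⟩
      = ∑ i, (lam i ^ (p - 1 + n) * nodalWeight univ lam i) •
          revCoeffs p (nodal (univ.erase i) lam) := by
  induction n with
  | zero =>
    ext k
    rw [pow_zero, one_eq_pi_single, pi_single_eq_sum_smul_revCoeffs_nodal_erase hp hlam]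
    rfl
  | succ n ih =>
    rw [pow_succ, mul_apply_eq_vecMul, ih, sum_vecMul]
    refine Finset.sum_congr rfl fun i _ => ?_
    rw [smul_vecMul, revCoeffs_nodal_erase_vecMul_companion hroots, smul_smul, ← add_assoc,
      pow_succ, mul_right_comm]

end Companion

theorem stmt6_general (p : ℕ) (hp : 0 < p) (a : Fin p → ℂ) (lam : Fin p → ℂ)
    (hdist : Function.Injective lam)
    (hroots : ∀ z : ℂ, z ^ p - ∑ k : Fin p, a k * z ^ (p - 1 - (k : ℕ))
      = ∏ i : Fin p, (z - lam i))
    (ω : ℕ) (k : Fin p) :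
    ((companion p a) ^ ω) ⟨0, hp⟩ k
      = (-1 : ℂ) ^ (k : ℕ) * ∑ i : Fin p,
          lam i ^ (p + ω - 1)
            * (∑ t ∈ (Finset.univ.erase i).powersetCard (k : ℕ), ∏ j ∈ t, lam j)
            / ∏ j ∈ Finset.univ.erase i, (lam i - lam j) := by
  have hcard (i : Fin p) : #(univ.erase i) = p - 1 := by simp
  rw [companion_pow_apply_zero hp hdist hroots, Finset.sum_apply, Finset.mul_sum,
    show p - 1 + ω = p + ω - 1 by omega]
  refine Finset.sum_congr rfl fun i _ => ?_
  have hcoeff := coeff_nodal (univ.erase i) lam (k := p - 1 - k) (by rw [hcard]; omega)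
  rw [hcard, show p - 1 - (p - 1 - k) = k by omega] at hcoeff
  rw [Pi.smul_apply, smul_eq_mul, revCoeffs, hcoeff, nodalWeight, prod_inv_distrib]
  ring

theorem stmt6 (p : ℕ) (hp : 0 < p) (a : Fin p → ℂ) (lam : Fin p → ℂ)
    (hdist : Function.Injective lam)
    (hroots : ∀ z : ℂ, z ^ p - ∑ k : Fin p, a k * z ^ (p - 1 - (k : ℕ))
      = ∏ i : Fin p, (z - lam i))
    (ω : ℕ) (hω : 1 ≤ ω) (k : Fin p) :
    ((companion p a) ^ ω) ⟨0, hp⟩ k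
      = (-1 : ℂ) ^ (k : ℕ) * ∑ i : Fin p,
          lam i ^ (p + ω - 1)
            * (∑ t ∈ (Finset.univ.erase i).powersetCard (k : ℕ), ∏ j ∈ t, lam j)
            / ∏ j ∈ Finset.univ.erase i, (lam i - lam j) :=
  stmt6_general p hp a lam hdist hroots ω k
end

section
/- Let p ≥ 1, let a_1,…,a_p ∈ ℂ, and let A be the p×p companion matrix with first row (a_1,…,a_p), entries A_{r+1,r} = 1 for r = 1,…,p−1, and all other entries 0. Suppose λ_1,…,λ_p ∈ ℂ are pairwise distinct and satisfy λ^p − a_1 λ^{p−1} − ⋯ − a_p = ∏_{i=1}^p (λ − λ_i). Fix ω ≥ 1 and k ∈ {1,…,p}. Let V be the p×p Vandermonde matrix with entries V_{r,j} = λ_j^{p−r}, and let W be the p×p matrix whose rows are given by W_{1,j} = λ_j^{p−1+ω}, W_{r,j} = λ_j^{p−r+1} for 2 ≤ r ≤ k, and W_{r,j} = λ_j^{p−r} for k+1 ≤ r ≤ p. Then (A^ω)_{1,k} · det(V) = (−1)^{k−1} det(W). -/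
open Matrix BigOperators Finset

/-! The columns of the Vandermonde matrix `V` are eigenvectors of the companion matrix `A`, so
`A ^ ω * V = V * diagonal (λ ^ ω)`. Reading off the first row, `(λ_j ^ (p - 1 + ω))_j` is the
combination of the rows of `V` whose coefficients form the first row of `A ^ ω`. Replacing row `k`
of `V` by it multiplies the determinant by `(A ^ ω)_{1,k}`, and cycling that row to the top turns
the matrix into `W` at the cost of the sign `(-1) ^ (k - 1)`. -/

section

variable {R : Type*} [CommRing R]

def revVandermonde {n : ℕ} (v : Fin n → R) : Matrix (Fin n) (Fin n) R :=
  of fun r j => v j ^ (n - 1 - (r : ℕ))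

theorem pow_mul_eq_mul_diagonal_pow {ι : Type*} [Fintype ι] [DecidableEq ι]
    {A V : Matrix ι ι R} {d : ι → R} (h : A * V = V * diagonal d) (m : ℕ) :
    A ^ m * V = V * diagonal (d ^ m) := by
  rw [← diagonal_pow]
  exact (SemiconjBy.pow_right (a := V) h.symm m).eq.symm

theorem det_updateRow_vecMul {ι : Type*} [Fintype ι] [DecidableEq ι]
    (M : Matrix ι ι R) (i : ι) (x : ι → R) :
    (M.updateRow i (x ᵥ* M)).det = x i * M.det := by
  rw [vecMul_eq_sum, det_updateRow_sum, smul_eq_mul]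

theorem det_submatrix_cycleRange_symm {n : ℕ} (M : Matrix (Fin n) (Fin n) R) (i : Fin n) :
    (M.submatrix i.cycleRange.symm id).det = (-1) ^ (i : ℕ) * M.det := by
  rw [det_permute, Equiv.Perm.sign_symm, Fin.sign_cycleRange]
  simp

theorem revVandermonde_updateRow_submatrix_cycleRange_symm_apply {n : ℕ}
    (v : Fin (n + 1) → R) (k : Fin (n + 1)) (u : Fin (n + 1) → R) (r j : Fin (n + 1)) :
    ((revVandermonde v).updateRow k u).submatrix k.cycleRange.symm id r j =
      if (r : ℕ) = 0 then u j
      else if (r : ℕ) ≤ k then v j ^ (n + 1 - r)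
      else v j ^ (n - r) := by
  cases r using Fin.cases with
  | zero => simp
  | succ r =>
    rw [submatrix_apply, Fin.cycleRange_symm_succ, updateRow_ne (Fin.succAbove_ne k r)]
    rcases lt_or_ge r.castSucc k with hr | hr
    · rw [Fin.succAbove_of_castSucc_lt _ _ hr]
      simp [revVandermonde, show (r : ℕ) + 1 ≤ k from hr]
    · rw [Fin.succAbove_of_le_castSucc _ _ hr]
      simp [revVandermonde, show ¬(r : ℕ) + 1 ≤ k from not_le.mpr (Nat.lt_succ_of_le hr)]

end

theorem companion_mul_revVandermonde {n : ℕ} (a lam : Fin (n + 1) → ℂ)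
    (hlam : ∀ j, lam j ^ (n + 1) = ∑ c, a c * lam j ^ (n - (c : ℕ))) :
    companion (n + 1) a * revVandermonde lam = revVandermonde lam * diagonal lam := by
  ext r j
  rw [mul_diagonal, mul_apply]
  cases r using Fin.cases with
  | zero => simp [companion, revVandermonde, ← pow_succ, hlam]
  | succ r =>
    rw [Finset.sum_eq_single r.castSucc]
    · simp [companion, revVandermonde, ← pow_succ]
      congr 1
      omega
    · intro c _ hc
      have hrc : (r : ℕ) ≠ c := fun h => hc (Fin.ext h.symm)
      simp [companion, hrc]
    · simp

theorem stmt7_general (p : ℕ) (hp : 0 < p) (a : Fin p → ℂ) (lam : Fin p → ℂ)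
    (hroots : ∀ z : ℂ, z ^ p - ∑ k : Fin p, a k * z ^ (p - 1 - (k : ℕ))
      = ∏ i : Fin p, (z - lam i))
    (ω : ℕ) (k : Fin p)
    (V W : Matrix (Fin p) (Fin p) ℂ)
    (hV : ∀ r j : Fin p, V r j = lam j ^ (p - 1 - (r : ℕ)))
    (hW : ∀ r j : Fin p, W r j =
      if (r : ℕ) = 0 then lam j ^ (p - 1 + ω)
      else if (r : ℕ) ≤ (k : ℕ) then lam j ^ (p - (r : ℕ))
      else lam j ^ (p - 1 - (r : ℕ))) :
    ((companion p a) ^ ω) ⟨0, hp⟩ k * V.det = (-1 : ℂ) ^ (k : ℕ) * W.det := by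
  obtain ⟨n, rfl⟩ : ∃ n, p = n + 1 := ⟨p - 1, (Nat.succ_pred_eq_of_pos hp).symm⟩
  have hlam : ∀ j, lam j ^ (n + 1) = ∑ c, a c * lam j ^ (n - (c : ℕ)) := fun j => by
    have := hroots (lam j)
    rw [prod_eq_zero (mem_univ j) (sub_self _)] at this
    simpa [sub_eq_zero] using this
  obtain rfl : V = revVandermonde lam := ext hV
  set x := (companion (n + 1) a ^ ω) ⟨0, hp⟩
  have hrow : x ᵥ* revVandermonde lam = fun j => lam j ^ (n + ω) := by
    rw [← mul_apply_eq_vecMul,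
      pow_mul_eq_mul_diagonal_pow (companion_mul_revVandermonde a lam hlam)]
    ext j
    simp [mul_diagonal, revVandermonde, pow_add]
  have hW_cycle : W = ((revVandermonde lam).updateRow k (x ᵥ* revVandermonde lam)).submatrix
      k.cycleRange.symm id := by
    ext r j
    rw [hW, revVandermonde_updateRow_submatrix_cycleRange_symm_apply, hrow]
    simp
  rw [hW_cycle, det_submatrix_cycleRange_symm, det_updateRow_vecMul, ← mul_assoc, ← mul_pow,
    neg_one_mul, neg_neg, one_pow, one_mul]

theorem stmt7 (p : ℕ) (hp : 0 < p) (a : Fin p → ℂ) (lam : Fin p → ℂ)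
    (hdist : Function.Injective lam)
    (hroots : ∀ z : ℂ, z ^ p - ∑ k : Fin p, a k * z ^ (p - 1 - (k : ℕ))
      = ∏ i : Fin p, (z - lam i))
    (ω : ℕ) (hω : 1 ≤ ω) (k : Fin p)
    (V W : Matrix (Fin p) (Fin p) ℂ)
    (hV : ∀ r j : Fin p, V r j = lam j ^ (p - 1 - (r : ℕ)))
    (hW : ∀ r j : Fin p, W r j =
      if (r : ℕ) = 0 then lam j ^ (p - 1 + ω)
      else if (r : ℕ) ≤ (k : ℕ) then lam j ^ (p - (r : ℕ))
      else lam j ^ (p - 1 - (r : ℕ))) :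
    ((companion p a) ^ ω) ⟨0, hp⟩ k * V.det = (-1 : ℂ) ^ (k : ℕ) * W.det :=
  stmt7_general p hp a lam hroots ω k V W hV hW
end

section
/- Let p ≥ 1, let a_1,…,a_p ∈ ℂ, and let A be the p×p companion matrix with first row (a_1,…,a_p), entries A_{r+1,r} = 1 for r = 1,…,p−1, and all other entries 0. Suppose λ_1,…,λ_p ∈ ℂ are pairwise distinct and satisfy λ^p − a_1 λ^{p−1} − ⋯ − a_p = ∏_{i=1}^p (λ − λ_i). Then for every ω ≥ 0, the (1,1) entry of A^ω equals the complete homogeneous symmetric polynomial of degree ω in the eigenvalues: (A^ω)_{1,1} = h_ω(λ_1,…,λ_p) = Σ_{i_1 + ⋯ + i_p = ω, i_j ≥ 0} λ_1^{i_1} ⋯ λ_p^{i_p}. -/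
/-!
With `H(t) = ∑ₙ hₙ tⁿ = ∏ᵢ (1 - λᵢ t)⁻¹`, reversing the characteristic polynomial gives
`∏ᵢ (1 - λᵢ t) = 1 - ∑ₖ aₖ t^(k+1)`, so `H` obeys the recurrence `hₙ₊₁ = ∑ₖ aₖ hₙ₋ₖ`.
The first column of `A^ω` is then `(h_ω, h_{ω-1}, …)`, i.e. its `r`-th entry is the coefficient
of `t^ω` in `t^r H(t)`: the first row of `A` performs the recurrence, the other rows shift.
-/

open Matrix BigOperators Finset

open PowerSeries

namespace PowerSeries

variable {R : Type*} [CommRing R]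

theorem mk_pow_mul_one_sub_C_mul_X (l : R) : mk (l ^ ·) * (1 - C l * X) = 1 := by
  simpa [rescale_mk, rescale_X] using congrArg (rescale l) (mk_one_mul_one_sub_eq_one R)

theorem coeff_prod_mk_pow {p : ℕ} (lam : Fin p → R) (n : ℕ) :
    coeff n (∏ i, mk (lam i ^ ·)) = ∑ d ∈ Nat.antidiagonalTuple p n, ∏ i, lam i ^ d i := by
  rw [coeff_prod, finsuppAntidiag, sum_map, ← piAntidiag_univ_fin_eq_antidiagonalTuple,
    ← sum_attach (piAntidiag univ n)]
  simp only [coeff_mk]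
  rfl

end PowerSeries

section Reversal

variable {K : Type*} [Field K] {p : ℕ} {a lam : Fin p → K}

theorem one_sub_mul_sum_eq_prod_one_sub_mul
    (hroots : ∀ z : K, z ^ p - ∑ k : Fin p, a k * z ^ (p - 1 - (k : ℕ))
      = ∏ i : Fin p, (z - lam i)) (w : K) :
    1 - w * ∑ k : Fin p, a k * w ^ (k : ℕ) = ∏ i : Fin p, (1 - lam i * w) := by
  rcases eq_or_ne w 0 with rfl | hw
  · simp
  have hpow (k : Fin p) : w ^ p * w⁻¹ ^ (p - 1 - (k : ℕ)) = w * w ^ (k : ℕ) := by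
    rw [← pow_mul_pow_sub w (show (k : ℕ) + 1 ≤ p by omega), mul_assoc, Nat.sub_sub,
      add_comm 1, ← mul_pow, mul_inv_cancel₀ hw, one_pow, mul_one, pow_succ']
  calc 1 - w * ∑ k : Fin p, a k * w ^ (k : ℕ)
      = w ^ p * (w⁻¹ ^ p - ∑ k : Fin p, a k * w⁻¹ ^ (p - 1 - (k : ℕ))) := by
        rw [mul_sub, mul_sum, mul_sum, ← mul_pow, mul_inv_cancel₀ hw, one_pow]
        simp only [mul_left_comm (w ^ p), hpow, mul_left_comm w]
    _ = ∏ i : Fin p, (1 - lam i * w) := by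
        rw [hroots, ← Fin.prod_const, ← prod_mul_distrib]
        refine prod_congr rfl fun i _ => ?_
        rw [mul_sub, mul_inv_cancel₀ hw, mul_comm w]

theorem PowerSeries.one_sub_X_mul_sum_eq_prod [Infinite K]
    (hroots : ∀ z : K, z ^ p - ∑ k : Fin p, a k * z ^ (p - 1 - (k : ℕ))
      = ∏ i : Fin p, (z - lam i)) :
    (1 - X * ∑ k : Fin p, C (a k) * X ^ (k : ℕ) : K⟦X⟧) = ∏ i : Fin p, (1 - C (lam i) * X) := by
  have hpoly : (1 - .X * ∑ k : Fin p, .C (a k) * .X ^ (k : ℕ) : Polynomial K)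
      = ∏ i : Fin p, (1 - .C (lam i) * .X) :=
    Polynomial.funext fun w => by
      simpa [Polynomial.eval_prod, Polynomial.eval_finsetSum]
        using one_sub_mul_sum_eq_prod_one_sub_mul hroots w
  simpa only [map_sub, map_one, map_mul, map_sum, map_prod, map_pow,
    Polynomial.coeToPowerSeries.ringHom_apply, Polynomial.coe_C, Polynomial.coe_X]
    using congrArg Polynomial.coeToPowerSeries.ringHom hpoly

end Reversal

section Companion

variable {q : ℕ} (a : Fin (q + 1) → ℂ)

@[simp]
theorem companion_apply_zero (c : Fin (q + 1)) : companion (q + 1) a 0 c = a c := by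
  simp [companion]

@[simp]
theorem companion_apply_succ (r : Fin q) (c : Fin (q + 1)) :
    companion (q + 1) a r.succ c = if c = r.castSucc then 1 else 0 := by
  simp only [companion, of_apply, Fin.val_succ, Fin.ext_iff, Fin.val_castSucc]
  grind

theorem companion_pow_apply_zero_s9 {H : ℂ⟦X⟧}
    (hH : (1 - X * ∑ k, C (a k) * X ^ (k : ℕ)) * H = 1) (ω : ℕ) (r : Fin (q + 1)) :
    (companion (q + 1) a ^ ω) r 0 = coeff ω (X ^ (r : ℕ) * H) := by
  have hrec (n : ℕ) : coeff (n + 1) H = ∑ k, a k * coeff n (X ^ (k : ℕ) * H) := by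
    have hH' : H = 1 + X * ((∑ k, C (a k) * X ^ (k : ℕ)) * H) := by
      linear_combination hH
    conv_lhs => rw [hH']
    simp [coeff_succ_X_mul, sum_mul, mul_assoc, coeff_C_mul]
  induction ω generalizing r with
  | zero =>
    induction r using Fin.cases with
    | zero => simpa using (congrArg constantCoeff hH).symm
    | succ r => simp [pow_succ', mul_assoc]
  | succ ω ih =>
    rw [pow_succ', mul_apply]
    induction r using Fin.cases with
    | zero => simp [ih, hrec]
    | succ r => simp [ih, pow_succ', mul_assoc, coeff_succ_X_mul]

end Companion

theorem stmt9_general (p : ℕ) (hp : 0 < p) (a : Fin p → ℂ) (lam : Fin p → ℂ)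
    (hroots : ∀ z : ℂ, z ^ p - ∑ k : Fin p, a k * z ^ (p - 1 - (k : ℕ))
      = ∏ i : Fin p, (z - lam i))
    (ω : ℕ) :
    ((companion p a) ^ ω) ⟨0, hp⟩ ⟨0, hp⟩
      = ∑ d ∈ Finset.Nat.antidiagonalTuple p ω, ∏ i : Fin p, lam i ^ d i := by
  obtain ⟨q, rfl⟩ : ∃ q, p = q + 1 := ⟨p - 1, by omega⟩
  have hH : (1 - X * ∑ k, C (a k) * X ^ (k : ℕ)) * ∏ i, mk (lam i ^ ·) = 1 := by
    rw [one_sub_X_mul_sum_eq_prod hroots, ← prod_mul_distrib]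
    exact prod_eq_one fun i _ => by rw [mul_comm, mk_pow_mul_one_sub_C_mul_X]
  simpa [coeff_prod_mk_pow] using companion_pow_apply_zero_s9 a hH ω 0

theorem stmt9 (p : ℕ) (hp : 0 < p) (a : Fin p → ℂ) (lam : Fin p → ℂ)
    (hdist : Function.Injective lam)
    (hroots : ∀ z : ℂ, z ^ p - ∑ k : Fin p, a k * z ^ (p - 1 - (k : ℕ))
      = ∏ i : Fin p, (z - lam i))
    (ω : ℕ) :
    ((companion p a) ^ ω) ⟨0, hp⟩ ⟨0, hp⟩
      = ∑ d ∈ Finset.Nat.antidiagonalTuple p ω, ∏ i : Fin p, lam i ^ d i :=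
  stmt9_general p hp a lam hroots ω
end
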